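/- arXiv:math/0504358 — 11 statements merged into one kernel-verified Lean document; each statement's English description precedes it below -/
import Mathlib

section
/- Let n, n₁, n₂ be unit vectors in ℝ³ (points of S²) with 1 − ⟨n₁,n₂⟩ ≠ 0. Define a₁₂ = ⟨n, n₁ − n₂⟩ / (1 − ⟨n₁,n₂⟩) and n₁₂ = n + a₁₂(n₂ − n₁). Then n₁₂ is also a unit vector, i.e. |n₁₂| = 1. -/
open scoped RealInnerProductSpace

/-- T-nets in the sphere S²: the fourth vertex of the discrete Moutard equation,
with the canonical coefficient, lies again on S². -/
theorem moutard_sphere_closure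
    (n n1 n2 : EuclideanSpace ℝ (Fin 3))
    (hn : ‖n‖ = 1) (hn1 : ‖n1‖ = 1) (hn2 : ‖n2‖ = 1)
    (hd : 1 - ⟪n1, n2⟫ ≠ 0)
    (a12 : ℝ) (ha : a12 = ⟪n, n1 - n2⟫ / (1 - ⟪n1, n2⟫))
    (n12 : EuclideanSpace ℝ (Fin 3)) (hn12 : n12 = n + a12 • (n2 - n1)) :
    ‖n12‖ = 1 := by
  have hnn : ⟪n, n⟫ = 1 := by
    rw [real_inner_self_eq_norm_sq, hn]; norm_num
  have hnn1 : ⟪n1, n1⟫ = 1 := by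
    rw [real_inner_self_eq_norm_sq, hn1]; norm_num
  have hnn2 : ⟪n2, n2⟫ = 1 := by
    rw [real_inner_self_eq_norm_sq, hn2]; norm_num
  have ha' : a12 * (1 - ⟪n1, n2⟫) = ⟪n, n1 - n2⟫ := by
    rw [ha, div_mul_cancel₀ _ hd]
  have key : ⟪n12, n12⟫ = 1 := by
    subst hn12
    simp only [inner_add_left, inner_add_right, inner_smul_left, inner_smul_right,
      inner_sub_left, inner_sub_right] at *
    simp only [inner_sub_right, RCLike.conj_to_real, real_inner_comm n2 n1,
      real_inner_comm n1 n, real_inner_comm n2 n] at *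
    linear_combination hnn + a12^2*hnn1 + a12^2*hnn2 + 2*a12*ha'
  have : ‖n12‖ ^ 2 = 1 := by rw [← real_inner_self_eq_norm_sq, key]
  nlinarith [norm_nonneg n12]
end

section
/- Let Q be a quadric {v ∈ ℝ^N : ⟨v,v⟩ = κ²} and let f, f₁, f₂ ∈ Q with κ² − ⟨f₁,f₂⟩ ≠ 0. Set a = ⟨f, f₁ − f₂⟩/(κ² − ⟨f₁,f₂⟩) and f₁₂ = f + a(f₂ − f₁). Then ⟨f₁₂, f₁₂⟩ = κ², and moreover a = 2⟨f, f₁ − f₂⟩/|f₁ − f₂|². -/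
open scoped RealInnerProductSpace

/-- T-nets in a quadric `{v : ⟨v,v⟩ = κ²}`: the discrete Moutard equation with the
canonical coefficient produces a point on the same quadric, and the coefficient has
the alternative expression `2⟨f, f₁ − f₂⟩/‖f₁ − f₂‖²`. -/
theorem moutard_quadric_closure
    (N : ℕ) (κ : ℝ) (f f1 f2 : EuclideanSpace ℝ (Fin N))
    (hf : ⟪f, f⟫ = κ ^ 2) (hf1 : ⟪f1, f1⟫ = κ ^ 2) (hf2 : ⟪f2, f2⟫ = κ ^ 2)
    (hd : κ ^ 2 - ⟪f1, f2⟫ ≠ 0)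
    (a : ℝ) (ha : a = ⟪f, f1 - f2⟫ / (κ ^ 2 - ⟪f1, f2⟫))
    (f12 : EuclideanSpace ℝ (Fin N)) (hf12 : f12 = f + a • (f2 - f1)) :
    ⟪f12, f12⟫ = κ ^ 2 ∧ a = 2 * ⟪f, f1 - f2⟫ / ‖f1 - f2‖ ^ 2 := by
  have hn : (‖f1 - f2‖ : ℝ) ^ 2 = ⟪f1 - f2, f1 - f2⟫ := by
    rw [real_inner_self_eq_norm_sq]
  have hcomm : ⟪f2, f1⟫ = ⟪f1, f2⟫ := real_inner_comm _ _
  have hc1 : ⟪f2, f⟫ = ⟪f, f2⟫ := real_inner_comm _ _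
  have hc2 : ⟪f1, f⟫ = ⟪f, f1⟫ := real_inner_comm _ _
  subst hf12 ha
  simp only [inner_add_left, inner_add_right, inner_sub_left, inner_sub_right,
    real_inner_smul_left, real_inner_smul_right, hf, hf1, hf2, hcomm, hc1, hc2] at hn ⊢
  generalize hp : ⟪f, f1⟫ = p at *
  generalize hq : ⟪f, f2⟫ = q at *
  generalize hr : ⟪f1, f2⟫ = r at *
  rw [hn]
  constructor
  · field_simp
    ring
  · rw [show κ ^ 2 - r - (r - κ ^ 2) = 2 * (κ ^ 2 - r) by ring]
    field_simp
end

section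
/- For four distinct complex numbers x, u, y, v, the cross-ratio equation β(x−u)(y−v) − α(u−y)(v−x) = 0 (with nonzero complex parameters α, β), i.e. q(x,u,y,v) = (x−u)(u−y)^{-1}(y−v)(v−x)^{-1} = α/β, is equivalent to the three-leg form α/(x−u) − β/(x−v) = (α−β)/(x−y). -/
/-- The cross-ratio equation `q(x,u,y,v) = α/β` is equivalent to its additive
three-leg form `α/(x−u) − β/(x−v) = (α−β)/(x−y)`. -/
theorem cross_ratio_three_leg_form
    (x u y v α β : ℂ) (hα : α ≠ 0) (hβ : β ≠ 0)
    (hxu : x ≠ u) (hxy : x ≠ y) (hxv : x ≠ v) (huy : u ≠ y) (huv : u ≠ v) (hyv : y ≠ v) :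
    (x - u) * (u - y)⁻¹ * (y - v) * (v - x)⁻¹ = α / β ↔
      α / (x - u) - β / (x - v) = (α - β) / (x - y) := by
  have h1 : x - u ≠ 0 := sub_ne_zero.mpr hxu
  have h2 : u - y ≠ 0 := sub_ne_zero.mpr huy
  have h3 : y - v ≠ 0 := sub_ne_zero.mpr hyv
  have h4 : v - x ≠ 0 := sub_ne_zero.mpr (Ne.symm hxv)
  have h5 : x - y ≠ 0 := sub_ne_zero.mpr hxy
  have h6 : x - v ≠ 0 := sub_ne_zero.mpr hxv
  constructor
  · intro h
    field_simp at h ⊢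
    linear_combination h
  · intro h
    field_simp at h ⊢
    linear_combination h
end

section
/- The cross-ratio system is 3D consistent: given complex numbers f, f₁, f₂, f₃ and parameters α₁, α₂, α₃, define f_{ij} for i≠j by the cross-ratio equations q(f, f_i, f_{ij}, f_j) = α_i/α_j. Then the three values of f_{123} obtained by imposing q(f_i, f_{ij}, f_{123}, f_{ik}) = α_j/α_k on the three faces adjacent to f_{123} all coincide and are given by f_{123} = [(α₁−α₂)f₁f₂ + (α₂−α₃)f₂f₃ + (α₃−α₁)f₃f₁] / [(α₂−α₁)f₃ + (α₃−α₂)f₁ + (α₁−α₃)f₂]. -/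
/-!
Each cross-ratio equation is linear in each of its four points, so `f_ij` is a Möbius expression
in `f, f_i, f_j`; substituting these into the equation on the face at `f_1` and clearing
denominators yields a polynomial identity. The other two faces follow by symmetry: swapping the
second and fourth argument inverts the cross-ratio, and the formula for `f_123` is invariant under
permutations of the indices (a transposition changes the sign of numerator and denominator).
-/

noncomputable def crossRatio (a b c d : ℂ) : ℂ := (a - b) * (b - c)⁻¹ * (c - d) * (d - a)⁻¹

theorem crossRatio_ne_zero_iff {a b c d : ℂ} :
    crossRatio a b c d ≠ 0 ↔ a ≠ b ∧ b ≠ c ∧ c ≠ d ∧ d ≠ a := by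
  simp [crossRatio, sub_eq_zero, and_assoc]

theorem crossRatio_swap (a b c d : ℂ) : crossRatio a d c b = (crossRatio a b c d)⁻¹ := by
  simp only [crossRatio, mul_inv, inv_inv, ← neg_sub b a, ← neg_sub c b, ← neg_sub d c,
    ← neg_sub a d, inv_neg]
  ring

theorem crossRatio_eq_div_iff {a b c d p q : ℂ} (hbc : b ≠ c) (hda : d ≠ a) (hq : q ≠ 0) :
    crossRatio a b c d = p / q ↔ q * (a - b) * (c - d) = p * (b - c) * (d - a) := by
  have := sub_ne_zero_of_ne hbc
  have := sub_ne_zero_of_ne hda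
  rw [crossRatio, eq_div_iff hq]
  constructor <;> intro h
  · field_simp at h; linear_combination h
  · field_simp; linear_combination h

theorem eq_div_of_crossRatio_eq_div {f a b x α β : ℂ} (hα : α ≠ 0) (hβ : β ≠ 0) (hab : a ≠ b)
    (h : crossRatio f a x b = α / β) :
    β * (f - a) + α * (b - f) ≠ 0 ∧
      x = (β * (f - a) * b + α * a * (b - f)) / (β * (f - a) + α * (b - f)) := by
  obtain ⟨-, hax, -, hbf⟩ := crossRatio_ne_zero_iff.mp (h ▸ div_ne_zero hα hβ)
  have hpoly := (crossRatio_eq_div_iff hax hbf hβ).mp h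
  have hD : β * (f - a) + α * (b - f) ≠ 0 := by
    intro hD
    have : α * (b - f) * (a - b) = 0 := by linear_combination (x - b) * hD - hpoly
    simp [hα, sub_eq_zero, hbf, hab] at this
  exact ⟨hD, by rw [eq_div_iff hD]; linear_combination hpoly⟩

theorem crossRatio_upper_face {f f1 f2 f3 f12 f13 F α1 α2 α3 : ℂ}
    (hα1 : α1 ≠ 0) (hα2 : α2 ≠ 0) (hα3 : α3 ≠ 0)
    (h12 : crossRatio f f1 f12 f2 = α1 / α2) (h13 : crossRatio f f1 f13 f3 = α1 / α3)
    (hf12 : f1 ≠ f2) (hf13 : f1 ≠ f3) (hF12 : f12 ≠ F)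
    (hD : (α2 - α1) * f3 + (α3 - α2) * f1 + (α1 - α3) * f2 ≠ 0)
    (hF : F = ((α1 - α2) * f1 * f2 + (α2 - α3) * f2 * f3 + (α3 - α1) * f3 * f1) /
              ((α2 - α1) * f3 + (α3 - α2) * f1 + (α1 - α3) * f2)) :
    crossRatio f1 f12 F f13 = α2 / α3 := by
  obtain ⟨-, h113, -, -⟩ := crossRatio_ne_zero_iff.mp (h13 ▸ div_ne_zero hα1 hα3)
  obtain ⟨hD12, rfl⟩ := eq_div_of_crossRatio_eq_div hα1 hα2 hf12 h12
  obtain ⟨hD13, rfl⟩ := eq_div_of_crossRatio_eq_div hα1 hα3 hf13 h13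
  rw [crossRatio_eq_div_iff hF12 h113.symm hα3, hF]
  -- hide the denominator of `F` from `field_simp`, which cannot see through its normal form
  generalize hG : (α2 - α1) * f3 + (α3 - α2) * f1 + (α1 - α3) * f2 = D at hD ⊢
  field_simp
  subst hG
  ring

theorem cross_ratio_3D_consistency_general
    (f f1 f2 f3 f12 f23 f13 F : ℂ) (α1 α2 α3 : ℂ)
    (hα1 : α1 ≠ 0) (hα2 : α2 ≠ 0) (hα3 : α3 ≠ 0)
    (h12 : crossRatio f f1 f12 f2 = α1 / α2)
    (h23 : crossRatio f f2 f23 f3 = α2 / α3)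
    (h13 : crossRatio f f1 f13 f3 = α1 / α3)
    -- genericity: the initial points are pairwise distinct and all the quantities
    -- appearing as denominators are nonzero
    (d4 : f1 ≠ f2) (d5 : f1 ≠ f3) (d6 : f2 ≠ f3)
    (g7 : f12 ≠ F) (g8 : f13 ≠ F)
    (gden : (α2 - α1) * f3 + (α3 - α2) * f1 + (α1 - α3) * f2 ≠ 0)
    (hF : F = ((α1 - α2) * f1 * f2 + (α2 - α3) * f2 * f3 + (α3 - α1) * f3 * f1) /
              ((α2 - α1) * f3 + (α3 - α2) * f1 + (α1 - α3) * f2)) :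
    crossRatio f1 f12 F f13 = α2 / α3 ∧
    crossRatio f2 f12 F f23 = α1 / α3 ∧
    crossRatio f3 f13 F f23 = α1 / α2 := by
  have h21 : crossRatio f f2 f12 f1 = α2 / α1 := by rw [crossRatio_swap, h12, inv_div]
  have h31 : crossRatio f f3 f13 f1 = α3 / α1 := by rw [crossRatio_swap, h13, inv_div]
  have h32 : crossRatio f f3 f23 f2 = α3 / α2 := by rw [crossRatio_swap, h23, inv_div]
  refine ⟨crossRatio_upper_face hα1 hα2 hα3 h12 h13 d4 d5 g7 gden hF,
    crossRatio_upper_face hα2 hα1 hα3 h21 h23 d4.symm d6 g7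
      (fun h => gden (by linear_combination -h)) (by rw [hF, ← neg_div_neg_eq]; ring),
    crossRatio_upper_face hα3 hα1 hα2 h31 h32 d5.symm d6.symm g8
      (fun h => gden (by linear_combination h)) (by rw [hF]; ring)⟩

/-- 3D consistency of the cross-ratio system: the value
`f₁₂₃ = [(α₁−α₂)f₁f₂ + (α₂−α₃)f₂f₃ + (α₃−α₁)f₃f₁] / [(α₂−α₁)f₃ + (α₃−α₂)f₁ + (α₁−α₃)f₂]`
satisfies all three cross-ratio equations on the faces adjacent to it, i.e. the three
values of `f₁₂₃` computed from these faces coincide and are given by this formula. -/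
theorem cross_ratio_3D_consistency
    (f f1 f2 f3 f12 f23 f13 F : ℂ) (α1 α2 α3 : ℂ)
    (hα1 : α1 ≠ 0) (hα2 : α2 ≠ 0) (hα3 : α3 ≠ 0)
    (h12 : crossRatio f f1 f12 f2 = α1 / α2)
    (h23 : crossRatio f f2 f23 f3 = α2 / α3)
    (h13 : crossRatio f f1 f13 f3 = α1 / α3)
    -- genericity: the initial points are pairwise distinct and all the quantities
    -- appearing as denominators are nonzero
    (d1 : f ≠ f1) (d2 : f ≠ f2) (d3 : f ≠ f3)
    (d4 : f1 ≠ f2) (d5 : f1 ≠ f3) (d6 : f2 ≠ f3)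
    (g1 : f1 ≠ f12) (g2 : f2 ≠ f12) (g3 : f2 ≠ f23) (g4 : f3 ≠ f23)
    (g5 : f1 ≠ f13) (g6 : f3 ≠ f13)
    (g7 : f12 ≠ F) (g8 : f13 ≠ F) (g9 : f23 ≠ F)
    (gden : (α2 - α1) * f3 + (α3 - α2) * f1 + (α1 - α3) * f2 ≠ 0)
    (hF : F = ((α1 - α2) * f1 * f2 + (α2 - α3) * f2 * f3 + (α3 - α1) * f3 * f1) /
              ((α2 - α1) * f3 + (α3 - α2) * f1 + (α1 - α3) * f2)) :
    crossRatio f1 f12 F f13 = α2 / α3 ∧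
    crossRatio f2 f12 F f23 = α1 / α3 ∧
    crossRatio f3 f13 F f23 = α1 / α2 :=
  cross_ratio_3D_consistency_general f f1 f2 f3 f12 f23 f13 F α1 α2 α3 hα1 hα2 hα3 h12 h23 h13 d4 d5
    d6 g7 g8 gden hF
end

section
/- The Hirota system is 3D consistent: given complex f, f₁, f₂, f₃ and parameters α₁, α₂, α₃, define f_{ij} by f_{ij}/f = (α_i f_i − α_j f_j)/(α_j f_i − α_i f_j). Then the three values of f_{123} computed from the three faces adjacent to f_{123} coincide and equal f_{123} = [α₃(α₁²−α₂²)f₁f₂ + α₁(α₂²−α₃²)f₂f₃ + α₂(α₃²−α₁²)f₃f₁] / [α₃(α₂²−α₁²)f₃ + α₁(α₃²−α₂²)f₁ + α₂(α₁²−α₃²)f₂]. -/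
/-! On the face at `f₁`, multiplying `α₃ f₁₂ - α₂ f₁₃` and `α₂ f₁₂ - α₃ f₁₃` by the denominators
of the faces `f₁₂` and `f₁₃` turns them, by the Hirota equations at `f`, into `f f₁ · den` and
`f · num`, where `num / den` is the proposed `f₁₂₃`; so `f₁₂₃ / f₁ = num / (f₁ · den)` is the Hirota
equation on that face. Both `num` and `den` are alternating in the three directions, so `f₁₂₃` is
symmetric and the faces at `f₂` and `f₃` are the same statement with the directions relabelled. -/

variable {K : Type*} [Field K]

/-- The Hirota equation `f_{ij} / f = (αᵢ fᵢ - αⱼ fⱼ) / (αⱼ fᵢ - αᵢ fⱼ)` with denominators cleared. -/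
def HirotaFace (αi αj f fi fj fij : K) : Prop :=
  fij * (αj * fi - αi * fj) = (αi * fi - αj * fj) * f

theorem hirotaFace_iff_div_eq {αi αj f fi fj fij : K} (hf : f ≠ 0)
    (hD : αj * fi - αi * fj ≠ 0) :
    fij / f = (αi * fi - αj * fj) / (αj * fi - αi * fj) ↔ HirotaFace αi αj f fi fj fij :=
  div_eq_div_iff hf hD

theorem HirotaFace.symm {αi αj f fi fj fij : K} (h : HirotaFace αi αj f fi fj fij) :
    HirotaFace αj αi f fj fi fij := by
  unfold HirotaFace at *
  linear_combination -h

theorem HirotaFace.consistency {a b c f fa fb fc fab fac F : K}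
    (hab : HirotaFace a b f fa fb fab) (hac : HirotaFace a c f fa fc fac)
    (hDab : b * fa - a * fb ≠ 0) (hDac : c * fa - a * fc ≠ 0)
    (hF : F * (c * (b ^ 2 - a ^ 2) * fc + a * (c ^ 2 - b ^ 2) * fa + b * (a ^ 2 - c ^ 2) * fb) =
      c * (a ^ 2 - b ^ 2) * fa * fb + a * (b ^ 2 - c ^ 2) * fb * fc +
        b * (c ^ 2 - a ^ 2) * fc * fa) :
    HirotaFace b c fa fab fac F := by
  unfold HirotaFace at *
  have hden : (c * fab - b * fac) * ((b * fa - a * fb) * (c * fa - a * fc)) =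
      f * fa * (c * (b ^ 2 - a ^ 2) * fc + a * (c ^ 2 - b ^ 2) * fa + b * (a ^ 2 - c ^ 2) * fb) := by
    linear_combination c * (c * fa - a * fc) * hab - b * (b * fa - a * fb) * hac
  have hnum : (b * fab - c * fac) * ((b * fa - a * fb) * (c * fa - a * fc)) =
      f * (c * (a ^ 2 - b ^ 2) * fa * fb + a * (b ^ 2 - c ^ 2) * fb * fc +
        b * (c ^ 2 - a ^ 2) * fc * fa) := by
    linear_combination b * (c * fa - a * fc) * hab - c * (b * fa - a * fb) * hac
  apply mul_right_cancel₀ (mul_ne_zero hDab hDac)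
  linear_combination F * hden - fa * hnum + f * fa * hF

theorem hirota_3D_consistency_general
    (f f1 f2 f3 f12 f23 f13 F : ℂ) (α1 α2 α3 : ℂ)
    (hf : f ≠ 0) (hf1 : f1 ≠ 0) (hf2 : f2 ≠ 0) (hf3 : f3 ≠ 0)
    -- the Hirota equations on the three faces adjacent to f
    (h12 : f12 / f = (α1 * f1 - α2 * f2) / (α2 * f1 - α1 * f2))
    (h23 : f23 / f = (α2 * f2 - α3 * f3) / (α3 * f2 - α2 * f3))
    (h13 : f13 / f = (α1 * f1 - α3 * f3) / (α3 * f1 - α1 * f3))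
    -- genericity: all denominators are nonzero
    (g12 : α2 * f1 - α1 * f2 ≠ 0) (g23 : α3 * f2 - α2 * f3 ≠ 0)
    (g13 : α3 * f1 - α1 * f3 ≠ 0)
    (k1 : α3 * f12 - α2 * f13 ≠ 0) (k2 : α3 * f12 - α1 * f23 ≠ 0)
    (k3 : α2 * f13 - α1 * f23 ≠ 0)
    (gden : α3 * (α2 ^ 2 - α1 ^ 2) * f3 + α1 * (α3 ^ 2 - α2 ^ 2) * f1 +
            α2 * (α1 ^ 2 - α3 ^ 2) * f2 ≠ 0)
    (hF : F = (α3 * (α1 ^ 2 - α2 ^ 2) * f1 * f2 + α1 * (α2 ^ 2 - α3 ^ 2) * f2 * f3 +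
               α2 * (α3 ^ 2 - α1 ^ 2) * f3 * f1) /
              (α3 * (α2 ^ 2 - α1 ^ 2) * f3 + α1 * (α3 ^ 2 - α2 ^ 2) * f1 +
               α2 * (α1 ^ 2 - α3 ^ 2) * f2)) :
    F / f1 = (α2 * f12 - α3 * f13) / (α3 * f12 - α2 * f13) ∧
    F / f2 = (α1 * f12 - α3 * f23) / (α3 * f12 - α1 * f23) ∧
    F / f3 = (α1 * f13 - α2 * f23) / (α2 * f13 - α1 * f23) := by
  rw [hirotaFace_iff_div_eq hf g12] at h12
  rw [hirotaFace_iff_div_eq hf g23] at h23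
  rw [hirotaFace_iff_div_eq hf g13] at h13
  rw [hirotaFace_iff_div_eq hf1 k1, hirotaFace_iff_div_eq hf2 k2, hirotaFace_iff_div_eq hf3 k3]
  have hFden := (eq_div_iff gden).mp hF
  have g21 : α1 * f2 - α2 * f1 ≠ 0 := by rwa [← neg_sub, neg_ne_zero]
  have g31 : α1 * f3 - α3 * f1 ≠ 0 := by rwa [← neg_sub, neg_ne_zero]
  have g32 : α2 * f3 - α3 * f2 ≠ 0 := by rwa [← neg_sub, neg_ne_zero]
  refine ⟨h12.consistency h13 g12 g13 hFden,
    h12.symm.consistency h23 g21 g23 (by linear_combination -hFden),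
    h13.symm.consistency h23.symm g31 g32 (by linear_combination hFden)⟩

/-- 3D consistency of the Hirota system: the value
`f₁₂₃ = [α₃(α₁²−α₂²)f₁f₂ + α₁(α₂²−α₃²)f₂f₃ + α₂(α₃²−α₁²)f₃f₁] /
        [α₃(α₂²−α₁²)f₃ + α₁(α₃²−α₂²)f₁ + α₂(α₁²−α₃²)f₂]`
satisfies the Hirota equation on all three faces adjacent to it, i.e. the three values
of `f₁₂₃` computed from these faces coincide and are given by this formula. -/
theorem hirota_3D_consistency
    (f f1 f2 f3 f12 f23 f13 F : ℂ) (α1 α2 α3 : ℂ)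
    (hα1 : α1 ≠ 0) (hα2 : α2 ≠ 0) (hα3 : α3 ≠ 0)
    (hf : f ≠ 0) (hf1 : f1 ≠ 0) (hf2 : f2 ≠ 0) (hf3 : f3 ≠ 0)
    -- the Hirota equations on the three faces adjacent to f
    (h12 : f12 / f = (α1 * f1 - α2 * f2) / (α2 * f1 - α1 * f2))
    (h23 : f23 / f = (α2 * f2 - α3 * f3) / (α3 * f2 - α2 * f3))
    (h13 : f13 / f = (α1 * f1 - α3 * f3) / (α3 * f1 - α1 * f3))
    -- genericity: all denominators are nonzero
    (g12 : α2 * f1 - α1 * f2 ≠ 0) (g23 : α3 * f2 - α2 * f3 ≠ 0)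
    (g13 : α3 * f1 - α1 * f3 ≠ 0)
    (k1 : α3 * f12 - α2 * f13 ≠ 0) (k2 : α3 * f12 - α1 * f23 ≠ 0)
    (k3 : α2 * f13 - α1 * f23 ≠ 0)
    (gden : α3 * (α2 ^ 2 - α1 ^ 2) * f3 + α1 * (α3 ^ 2 - α2 ^ 2) * f1 +
            α2 * (α1 ^ 2 - α3 ^ 2) * f2 ≠ 0)
    (hF : F = (α3 * (α1 ^ 2 - α2 ^ 2) * f1 * f2 + α1 * (α2 ^ 2 - α3 ^ 2) * f2 * f3 +
               α2 * (α3 ^ 2 - α1 ^ 2) * f3 * f1) /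
              (α3 * (α2 ^ 2 - α1 ^ 2) * f3 + α1 * (α3 ^ 2 - α2 ^ 2) * f1 +
               α2 * (α1 ^ 2 - α3 ^ 2) * f2)) :
    F / f1 = (α2 * f12 - α3 * f13) / (α3 * f12 - α2 * f13) ∧
    F / f2 = (α1 * f12 - α3 * f23) / (α3 * f12 - α1 * f23) ∧
    F / f3 = (α1 * f13 - α2 * f23) / (α2 * f13 - α1 * f23) :=
  hirota_3D_consistency_general f f1 f2 f3 f12 f23 f13 F α1 α2 α3 hf hf1 hf2 hf3 h12 h23 h13 g12 g23
    g13 k1 k2 k3 gden hF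
end

section
/- Matrices L(f_i, f, α_i; λ) = [[1, f − f_i], [λα_i/(f − f_i), 1]] give a zero curvature representation for the complex cross-ratio equation: if four complex numbers f, f₁, f₁₂, f₂ satisfy q(f, f₁, f₁₂, f₂) = α₁/α₂, then L(f₁₂, f₁, α₂; λ) · L(f₁, f, α₁; λ) = L(f₁₂, f₂, α₁; λ) · L(f₂, f, α₂; λ) identically in λ. -/
open Matrix

/-- The complex cross-ratio `q(a,b,c,d) = (a−b)(b−c)⁻¹(c−d)(d−a)⁻¹`. -/
noncomputable def crossRatio' (a b c d : ℂ) : ℂ := (a - b) * (b - c)⁻¹ * (c - d) * (d - a)⁻¹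

/-- The transition matrix `L(fᵢ, f, αᵢ; λ)` of the zero curvature representation of the
cross-ratio equation. -/
noncomputable def transitionL (fi f αi lam : ℂ) : Matrix (Fin 2) (Fin 2) ℂ :=
  !![1, f - fi; lam * αi / (f - fi), 1]

/-- Zero curvature representation for the complex cross-ratio equation. -/
theorem cross_ratio_zero_curvature
    (f f1 f2 f12 : ℂ) (α1 α2 : ℂ) (hα1 : α1 ≠ 0) (hα2 : α2 ≠ 0)
    (h1 : f ≠ f1) (h2 : f1 ≠ f12) (h3 : f12 ≠ f2) (h4 : f2 ≠ f)
    (h5 : f ≠ f12) (h6 : f1 ≠ f2)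
    (hcr : crossRatio' f f1 f12 f2 = α1 / α2) :
    ∀ lam : ℂ,
      transitionL f12 f1 α2 lam * transitionL f1 f α1 lam =
        transitionL f12 f2 α1 lam * transitionL f2 f α2 lam := by
  have d1 : f - f1 ≠ 0 := sub_ne_zero.mpr h1
  have d2 : f1 - f12 ≠ 0 := sub_ne_zero.mpr h2
  have d3 : f12 - f2 ≠ 0 := sub_ne_zero.mpr h3
  have d4 : f2 - f ≠ 0 := sub_ne_zero.mpr h4
  have d2' : f2 - f12 ≠ 0 := sub_ne_zero.mpr h3.symm
  have d4' : f - f2 ≠ 0 := sub_ne_zero.mpr h4.symm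
  have heq : (f - f1) * (f12 - f2) * α2 = α1 * ((f1 - f12) * (f2 - f)) := by
    unfold crossRatio' at hcr
    field_simp at hcr
    linear_combination hcr
  intro lam
  ext i j
  fin_cases i <;> fin_cases j <;>
      simp [transitionL, Matrix.mul_apply, Fin.sum_univ_two] <;>
      field_simp
  · linear_combination lam * heq
  · linear_combination lam * (f1 + f2 - f - f12) * heq
  · linear_combination (-lam) * heq
end

section
/- For a ∈ (0,1), the sequence z_n defined by z₀ = 0, z₁ = c ≠ 0, and the recurrence n(z_{n+1} − z_n)(z_n − z_{n−1})/(z_{n+1} − z_{n−1}) = a z_n satisfies the explicit formulas z_{2n} = (∏_{k=1}^{n−1} (k+a)/(k−a)) · (n/(n−a)) · c and z_{2n+1} = (∏_{k=1}^{n} (k+a)/(k−a)) · c, for all n ≥ 1. -/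
/-!
The recurrence is affine in its newest term `z (n + 1)`, with leading coefficient
`n (z n - z (n - 1)) - a z n`; wherever that coefficient is nonzero, `z (n + 1)` is determined by
the two previous terms. Writing `P n = ∏_{k=1}^{n} (k + a)/(k - a)`, the even terms are
`z (2n) = n/(n + a) · P n · c`, a form that also covers `z 0 = 0`. Since the recurrence is
homogeneous, checking that these values satisfy it and keep the leading coefficient nonzero
reduces to two rational identities in `n` and `a`, valid as soon as `a` is not an integer.
-/

namespace DiscretePower

variable {K : Type*} [Field K]

def axisCoeff (a : K) (n : ℕ) : K := ∏ k ∈ Finset.Icc 1 n, ((k : K) + a) / ((k : K) - a)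

@[simp]
lemma axisCoeff_zero (a : K) : axisCoeff a 0 = 1 := by
  simp [axisCoeff]

lemma axisCoeff_succ (a : K) (n : ℕ) :
    axisCoeff a (n + 1) = axisCoeff a n * (((n : K) + 1 + a) / ((n : K) + 1 - a)) := by
  rw [axisCoeff, Finset.prod_Icc_succ_top (by omega), axisCoeff]
  push_cast
  rfl

lemma natCast_add_ne_zero_of_forall_ne_intCast {a : K} (ha : ∀ k : ℤ, a ≠ k) (n : ℕ) :
    (n : K) + a ≠ 0 := by
  intro h
  exact ha (-n) (by push_cast; linear_combination h)

lemma natCast_add_one_sub_ne_zero_of_forall_ne_intCast {a : K} (ha : ∀ k : ℤ, a ≠ k) (n : ℕ) :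
    (n : K) + 1 - a ≠ 0 := by
  intro h
  exact ha (n + 1) (by push_cast; linear_combination -h)

lemma axisCoeff_ne_zero {a : K} (ha : ∀ k : ℤ, a ≠ k) (n : ℕ) : axisCoeff a n ≠ 0 := by
  induction n with
  | zero => simp
  | succ n ih =>
    rw [axisCoeff_succ]
    have := natCast_add_ne_zero_of_forall_ne_intCast ha (n + 1)
    push_cast at this
    exact mul_ne_zero ih (div_ne_zero (by simpa [add_right_comm] using this)
      (natCast_add_one_sub_ne_zero_of_forall_ne_intCast ha n))

lemma eq_of_recurrence {m a p x y y' : K} (hy : m * (y - x) * (x - p) = a * x * (y - p))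
    (hy' : m * (y' - x) * (x - p) = a * x * (y' - p)) (hne : m * (x - p) ≠ a * x) : y = y' := by
  have h : (y - y') * (m * (x - p) - a * x) = 0 := by linear_combination hy - hy'
  exact sub_eq_zero.mp ((mul_eq_zero.mp h).resolve_right (sub_ne_zero.mpr hne))

lemma recurrence_odd_step {a s y : K} {n : ℕ} (ha0 : a ≠ 0) (hs : s ≠ 0)
    (hna : (n : K) + a ≠ 0) (hna' : (n : K) + 1 - a ≠ 0)
    (hy : (2 * n + 1 : K) * (y - s) * (s - n / (n + a) * s) = a * s * (y - n / (n + a) * s)) :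
    y = (n + 1) / (n + 1 - a) * s := by
  refine eq_of_recurrence hy (by field_simp; ring) (sub_ne_zero.mp ?_)
  have hlead : (2 * n + 1 : K) * (s - n / (n + a) * s) - a * s = a * (n + 1 - a) / (n + a) * s := by
    field_simp
    ring
  rw [hlead]
  exact mul_ne_zero (div_ne_zero (mul_ne_zero ha0 hna') hna) hs

lemma recurrence_even_step [CharZero K] {a s y : K} {n : ℕ} (ha0 : a ≠ 0) (hs : s ≠ 0)
    (hna' : (n : K) + 1 - a ≠ 0)
    (hy : (2 * n + 2 : K) * (y - (n + 1) / (n + 1 - a) * s) * ((n + 1) / (n + 1 - a) * s - s) =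
      a * ((n + 1) / (n + 1 - a) * s) * (y - s)) :
    y = (n + 1 + a) / (n + 1 - a) * s := by
  refine eq_of_recurrence hy (by field_simp; ring) (sub_ne_zero.mp ?_)
  have hlead : (2 * n + 2 : K) * ((n + 1) / (n + 1 - a) * s - s) - a * ((n + 1) / (n + 1 - a) * s)
      = a * (n + 1) / (n + 1 - a) * s := by
    field_simp
    ring
  rw [hlead]
  exact mul_ne_zero (div_ne_zero (mul_ne_zero ha0 (Nat.cast_add_one_ne_zero n)) hna') hs

theorem eq_axisCoeff_mul_of_recurrence [CharZero K] {a c : K} (ha : ∀ k : ℤ, a ≠ k) (hc : c ≠ 0)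
    {z : ℕ → K} (h0 : z 0 = 0) (h1 : z 1 = c)
    (hrec : ∀ n : ℕ, ((n : K) + 1) * (z (n + 2) - z (n + 1)) * (z (n + 1) - z n) =
      a * z (n + 1) * (z (n + 2) - z n)) (n : ℕ) :
    z (2 * n) = n / (n + a) * (axisCoeff a n * c) ∧ z (2 * n + 1) = axisCoeff a n * c := by
  induction n with
  | zero => simp [h0, h1]
  | succ n ih =>
    obtain ⟨hEven, hOdd⟩ := ih
    set s := axisCoeff a n * c
    have hs : s ≠ 0 := mul_ne_zero (axisCoeff_ne_zero ha n) hc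
    have ha0 : a ≠ 0 := by exact_mod_cast ha 0
    have hna' := natCast_add_one_sub_ne_zero_of_forall_ne_intCast ha n
    have hEven' : z (2 * n + 2) = (n + 1) / (n + 1 - a) * s := by
      refine recurrence_odd_step ha0 hs (natCast_add_ne_zero_of_forall_ne_intCast ha n) hna' ?_
      have h := hrec (2 * n)
      rw [hOdd, hEven] at h
      push_cast at h
      linear_combination h
    have hOdd' : z (2 * n + 3) = (n + 1 + a) / (n + 1 - a) * s := by
      refine recurrence_even_step ha0 hs hna' ?_
      have h := hrec (2 * n + 1)
      rw [hOdd, hEven'] at h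
      push_cast at h
      linear_combination h
    have hna := natCast_add_ne_zero_of_forall_ne_intCast ha (n + 1)
    push_cast at hna
    rw [show 2 * (n + 1) + 1 = 2 * n + 3 by ring, show 2 * (n + 1) = 2 * n + 2 by ring,
      hEven', hOdd', axisCoeff_succ]
    push_cast
    constructor
    · field_simp
      ring
    · ring

end DiscretePower

/-- Explicit solution of the recurrence
`n(z_{n+1} − z_n)(z_n − z_{n−1}) = a z_n (z_{n+1} − z_{n−1})` defining the discrete power
function `z^{2a}` along a coordinate semi-axis:
`z_{2n} = (∏_{k=1}^{n−1} (k+a)/(k−a)) · (n/(n−a)) · c` and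
`z_{2n+1} = (∏_{k=1}^{n} (k+a)/(k−a)) · c` for `n ≥ 1`. -/
theorem discrete_power_z_axis_values
    (a : ℝ) (ha : 0 < a) (ha' : a < 1) (c : ℂ) (hc : c ≠ 0) (z : ℕ → ℂ)
    (h0 : z 0 = 0) (h1 : z 1 = c)
    (hrec : ∀ n : ℕ, 1 ≤ n →
      (n : ℂ) * (z (n + 1) - z n) * (z n - z (n - 1)) =
        (a : ℂ) * z n * (z (n + 1) - z (n - 1))) :
    ∀ n : ℕ, 1 ≤ n →
      z (2 * n) = (∏ k ∈ Finset.Icc 1 (n - 1), (((k : ℂ) + a) / ((k : ℂ) - a))) *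
          ((n : ℂ) / ((n : ℂ) - a)) * c ∧
      z (2 * n + 1) = (∏ k ∈ Finset.Icc 1 n, (((k : ℂ) + a) / ((k : ℂ) - a))) * c := by
  have ha_int : ∀ k : ℤ, (a : ℂ) ≠ k := by
    intro k hk
    have hak : a = k := by exact_mod_cast hk
    have : (0 : ℝ) < k ∧ (k : ℝ) < 1 := hak ▸ ⟨ha, ha'⟩
    norm_cast at this
    omega
  have hrec' : ∀ n : ℕ, ((n : ℂ) + 1) * (z (n + 2) - z (n + 1)) * (z (n + 1) - z n) =
      a * z (n + 1) * (z (n + 2) - z n) := fun n => by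
    simpa using hrec (n + 1) (by omega)
  intro n hn
  obtain ⟨m, rfl⟩ : ∃ m, n = m + 1 := ⟨n - 1, by omega⟩
  obtain ⟨hEven, hOdd⟩ :=
    DiscretePower.eq_axisCoeff_mul_of_recurrence ha_int hc h0 h1 hrec' (m + 1)
  refine ⟨?_, hOdd⟩
  have hma := DiscretePower.natCast_add_ne_zero_of_forall_ne_intCast ha_int (m + 1)
  have hma' := DiscretePower.natCast_add_one_sub_ne_zero_of_forall_ne_intCast ha_int m
  rw [hEven, DiscretePower.axisCoeff_succ, Nat.add_sub_cancel]
  push_cast at hma ⊢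
  field_simp
  rfl
end

section
/- Correspondence between cross-ratio and Hirota systems: suppose complex numbers w(x₀), w(y₀), w(x₁), w(y₁) and complex parameters θ₀, θ₁ satisfy the Hirota equation θ₀w(x₀)w(y₀) + θ₁w(y₀)w(x₁) − θ₀w(x₁)w(y₁) − θ₁w(y₁)w(x₀) = 0. Define differences z(y₀)−z(x₀) = θ₀w(x₀)w(y₀), z(x₁)−z(y₀) = θ₁w(y₀)w(x₁), z(y₁)−z(x₁) = θ₀w(x₁)w(y₁), z(x₀)−z(y₁) = θ₁w(y₁)w(x₀) up to sign conventions so that these four differences sum to zero around the quadrilateral; this is consistent by the Hirota equation. Then the resulting points satisfy the cross-ratio equation q(z(x₀), z(y₀), z(x₁), z(y₁)) = θ₀²/θ₁². -/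
/-- The complex cross-ratio `q(a,b,c,d) = (a−b)(b−c)⁻¹(c−d)(d−a)⁻¹`. -/
noncomputable def crossRatioQ (a b c d : ℂ) : ℂ := (a - b) * (b - c)⁻¹ * (c - d) * (d - a)⁻¹

/-- From the Hirota system to the cross-ratio system: if `w` satisfies the Hirota equation
on a quadrilateral and `z` is defined along the edges by `z(y) − z(x) = θ(x,y)w(x)w(y)`
(consistently around the quadrilateral), then `z` satisfies the cross-ratio equation
`q(z(x₀), z(y₀), z(x₁), z(y₁)) = θ₀²/θ₁²`. -/
theorem hirota_to_cross_ratio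
    (θ0 θ1 : ℂ) (hθ0 : θ0 ≠ 0) (hθ1 : θ1 ≠ 0)
    (wx0 wy0 wx1 wy1 : ℂ)
    (hwx0 : wx0 ≠ 0) (hwy0 : wy0 ≠ 0) (hwx1 : wx1 ≠ 0) (hwy1 : wy1 ≠ 0)
    (hHirota : θ0 * wx0 * wy0 + θ1 * wy0 * wx1 - θ0 * wx1 * wy1 - θ1 * wy1 * wx0 = 0)
    (zx0 zy0 zx1 zy1 : ℂ)
    (h1 : zy0 - zx0 = θ0 * wx0 * wy0)
    (h2 : zx1 - zy0 = θ1 * wy0 * wx1)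
    (h3 : zx1 - zy1 = θ0 * wy1 * wx1)
    (h4 : zy1 - zx0 = θ1 * wy1 * wx0) :
    crossRatioQ zx0 zy0 zx1 zy1 = θ0 ^ 2 / θ1 ^ 2 := by
  have e1 : zx0 - zy0 = -(θ0 * wx0 * wy0) := by linear_combination -h1
  have e2 : zy0 - zx1 = -(θ1 * wy0 * wx1) := by linear_combination -h2
  have e3 : zy1 - zx0 = θ1 * wy1 * wx0 := h4
  unfold crossRatioQ
  rw [e1, e2, h3, e3]
  field_simp
end

section
/- For oriented circles C₀, C₁ in the plane with centers c₀, c₁, radii r₀, r₁ > 0, intersecting at angle φ* (meaning |c₀ − c₁|² = r₀² + r₁² + 2r₀r₁cos φ*, with φ* ∈ (0,π)), the angle ψ₀₁ at the center c₀ subtended by the two intersection points satisfies exp(iψ₀₁) = (r₀ + r₁ exp(iφ*)) / (r₀ + r₁ exp(−iφ*)). -/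
/-!
Put `z = r₀ + r₁e^{iφ}`. By the law of cosines `|z| = |c₁ − c₀|`, so the triangle
`0, r₀, z` (sides `r₀`, `r₁`) is carried onto `c₀, p, c₁` by the similarity
`w ↦ c₀ + w (c₁ − c₀)/z`; this gives the intersection point
`p = c₀ + r₀(c₁ − c₀)/z`.
Doing the same with `z̄ = r₀ + r₁e^{−iφ}` gives the second point `q`, and
`(q − c₀)/(p − c₀) = z/z̄`.
-/

open Complex

namespace Complex

theorem norm_similar_point_sub {c d a b : ℂ} (hab : a + b ≠ 0) (hd : ‖d‖ = ‖a + b‖) :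
    ‖c + a * d / (a + b) - c‖ = ‖a‖ ∧ ‖c + a * d / (a + b) - (c + d)‖ = ‖b‖ := by
  have hscale (w : ℂ) : ‖w * d / (a + b)‖ = ‖w‖ := by
    rw [norm_div, norm_mul, hd, mul_div_cancel_right₀ _ (norm_ne_zero_iff.mpr hab)]
  constructor
  · rw [add_sub_cancel_left, hscale]
  · have h : c + a * d / (a + b) - (c + d) = -b * d / (a + b) := by
      field_simp
      ring
    rw [h, hscale, norm_neg]

variable (r₀ r₁ θ : ℝ)

theorem im_ofReal_add_ofReal_mul_exp :
    ((r₀ : ℂ) + r₁ * exp (θ * I)).im = r₁ * Real.sin θ := by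
  simp [exp_ofReal_mul_I_im]

theorem ofReal_add_ofReal_mul_exp_ne_zero (hr₁ : r₁ ≠ 0) (hθ : Real.sin θ ≠ 0) :
    (r₀ : ℂ) + r₁ * exp (θ * I) ≠ 0 := fun h =>
  mul_ne_zero hr₁ hθ (by rw [← im_ofReal_add_ofReal_mul_exp, h, zero_im])

theorem norm_sq_ofReal_add_ofReal_mul_exp :
    ‖(r₀ : ℂ) + r₁ * exp (θ * I)‖ ^ 2 = r₀ ^ 2 + r₁ ^ 2 + 2 * r₀ * r₁ * Real.cos θ := by
  have hz : (r₀ : ℂ) + r₁ * exp (θ * I) =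
      ((r₀ + r₁ * Real.cos θ : ℝ) : ℂ) + ((r₁ * Real.sin θ : ℝ) : ℂ) * I := by
    rw [exp_mul_I, ← ofReal_cos, ← ofReal_sin]
    push_cast
    ring
  rw [Complex.sq_norm, hz, normSq_add_mul_I]
  nlinarith [Real.sin_sq_add_cos_sq θ]

variable {r₀ r₁ θ}

theorem norm_intersection_point_sub {c₀ c₁ : ℂ} (hr₀ : 0 ≤ r₀) (hr₁ : 0 ≤ r₁)
    (hz : (r₀ : ℂ) + r₁ * exp (θ * I) ≠ 0)
    (hc : ‖c₁ - c₀‖ ^ 2 = r₀ ^ 2 + r₁ ^ 2 + 2 * r₀ * r₁ * Real.cos θ) :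
    ‖c₀ + r₀ * (c₁ - c₀) / (r₀ + r₁ * exp (θ * I)) - c₀‖ = r₀ ∧
      ‖c₀ + r₀ * (c₁ - c₀) / (r₀ + r₁ * exp (θ * I)) - c₁‖ = r₁ := by
  have hd : ‖c₁ - c₀‖ = ‖(r₀ : ℂ) + r₁ * exp (θ * I)‖ := by
    rw [← sq_eq_sq₀ (norm_nonneg _) (norm_nonneg _), hc, norm_sq_ofReal_add_ofReal_mul_exp]
  have h := norm_similar_point_sub (c := c₀) hz hd
  rwa [add_sub_cancel, norm_real, norm_mul, norm_real, norm_exp_ofReal_mul_I, mul_one,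
    Real.norm_of_nonneg hr₀, Real.norm_of_nonneg hr₁] at h

end Complex

/-- For two circles in `ℂ` with centers `c₀, c₁`, radii `r₀, r₁ > 0`, intersecting at
angle `φ* ∈ (0,π)` (i.e. `|c₀−c₁|² = r₀² + r₁² + 2r₀r₁cos φ*`), there are two
intersection points `p, q`, and with a suitable labelling the angle at the center `c₀`
subtended by them satisfies `(q−c₀)/(p−c₀) = (r₀ + r₁e^{iφ*})/(r₀ + r₁e^{−iφ*})`. -/
theorem circle_intersection_center_angle
    (c0 c1 : ℂ) (r0 r1 : ℝ) (hr0 : 0 < r0) (hr1 : 0 < r1)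
    (φ : ℝ) (hφ0 : 0 < φ) (hφπ : φ < Real.pi)
    (hangle : ‖c0 - c1‖ ^ 2 =
      r0 ^ 2 + r1 ^ 2 + 2 * r0 * r1 * Real.cos φ) :
    ∃ p q : ℂ,
      ‖p - c0‖ = r0 ∧ ‖p - c1‖ = r1 ∧
      ‖q - c0‖ = r0 ∧ ‖q - c1‖ = r1 ∧
      p ≠ q ∧
      (q - c0) / (p - c0) =
        ((r0 : ℂ) + (r1 : ℂ) * Complex.exp (φ * I)) /
          ((r0 : ℂ) + (r1 : ℂ) * Complex.exp (-(φ : ℂ) * I)) := by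
  have hsin : Real.sin φ ≠ 0 := (Real.sin_pos_of_pos_of_lt_pi hφ0 hφπ).ne'
  rw [show -(φ : ℂ) * I = ((-φ : ℝ) : ℂ) * I by push_cast; ring]
  rw [norm_sub_rev] at hangle
  have hz := ofReal_add_ofReal_mul_exp_ne_zero r0 r1 φ hr1.ne' hsin
  have hz' := ofReal_add_ofReal_mul_exp_ne_zero r0 r1 (-φ) hr1.ne'
    (by rwa [Real.sin_neg, neg_ne_zero])
  obtain ⟨hp0, hp1⟩ := norm_intersection_point_sub hr0.le hr1.le hz hangle
  obtain ⟨hq0, hq1⟩ := norm_intersection_point_sub hr0.le hr1.le hz' (by rwa [Real.cos_neg])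
  set z : ℂ := r0 + r1 * exp (φ * I)
  set z' : ℂ := r0 + r1 * exp ((-φ : ℝ) * I)
  have hzz' : z ≠ z' := fun h => by
    have him := congrArg im h
    simp only [z, z', im_ofReal_add_ofReal_mul_exp, Real.sin_neg] at him
    exact mul_ne_zero hr1.ne' hsin (by linarith)
  have hp0_ne : c0 + r0 * (c1 - c0) / z - c0 ≠ 0 :=
    norm_ne_zero_iff.mp (by rw [hp0]; exact hr0.ne')
  have hratio : (c0 + r0 * (c1 - c0) / z' - c0) / (c0 + r0 * (c1 - c0) / z - c0) = z / z' := by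
    rw [add_sub_cancel_left] at hp0_ne ⊢
    rw [add_sub_cancel_left, div_div_div_cancel_left' _ _ (div_ne_zero_iff.mp hp0_ne).1]
  refine ⟨_, _, hp0, hp1, hq0, hq1, fun hpq => hzz' ?_, hratio⟩
  rwa [hpq, div_self (hpq ▸ hp0_ne), eq_comm, div_eq_one_iff_eq hz'] at hratio
end

section
/- Linearization of the cross-ratio system: suppose functions f, g on the four vertices x₀, y₀, x₁, y₁ of a parallelogram p (with p(y₀)−p(x₀) = p(x₁)−p(y₁) = θ₀ and p(y₁)−p(x₀) = p(x₁)−p(y₀) = θ₁, θ₀ ≠ ±θ₁) are related along all four directed edges by g(y) − g(x) = (f(x)+f(y))(p(y)−p(x)). Then f satisfies the discrete Cauchy-Riemann equation (f(y₁)−f(y₀))/(f(x₁)−f(x₀)) = (θ₁−θ₀)/(θ₁+θ₀) if and only if g satisfies the same discrete Cauchy-Riemann equation (g(y₁)−g(y₀))/(g(x₁)−g(x₀)) = (θ₁−θ₀)/(θ₁+θ₀). More precisely: the closedness of the edge-form (f(x)+f(y))(p(y)−p(x)) around the quadrilateral is equivalent to the CR equation for f, and the closedness of f(x)+f(y) (i.e.,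 the consistency of recovering f from g) is equivalent to the CR equation for g. -/
/-- Linearization of the cross-ratio system on a parallelogram: if `g(y) − g(x) =
(f(x)+f(y))(p(y)−p(x))` along all four directed edges, then `f` satisfies the discrete
Cauchy-Riemann equation iff `g` does; moreover the closedness of the edge-form
`(f(x)+f(y))(p(y)−p(x))` is equivalent to the CR equation for `f`, and the closedness of
`f(x)+f(y) = (g(y)−g(x))/(p(y)−p(x))` is equivalent to the CR equation for `g`. -/
theorem linearization_cross_ratio_to_CR
    (θ0 θ1 : ℂ) (hθ0 : θ0 ≠ 0) (hθ1 : θ1 ≠ 0) (hne : θ0 ≠ θ1) (hne' : θ0 ≠ -θ1)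
    (px0 py0 px1 py1 : ℂ)
    (hp1 : py0 - px0 = θ0) (hp2 : px1 - py1 = θ0)
    (hp3 : py1 - px0 = θ1) (hp4 : px1 - py0 = θ1)
    (fx0 fy0 fx1 fy1 gx0 gy0 gx1 gy1 : ℂ)
    (h1 : gy0 - gx0 = (fx0 + fy0) * (py0 - px0))
    (h2 : gy1 - gx0 = (fx0 + fy1) * (py1 - px0))
    (h3 : gy0 - gx1 = (fx1 + fy0) * (py0 - px1))
    (h4 : gy1 - gx1 = (fx1 + fy1) * (py1 - px1))
    (hf : fx1 ≠ fx0) (hg : gx1 ≠ gx0) :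
    -- main claim: f satisfies the discrete CR equation iff g does
    ((fy1 - fy0) / (fx1 - fx0) = (θ1 - θ0) / (θ1 + θ0) ↔
      (gy1 - gy0) / (gx1 - gx0) = (θ1 - θ0) / (θ1 + θ0)) ∧
    -- closedness of the edge-form (f(x)+f(y))(p(y)−p(x)) ↔ CR for f
    ((fx0 + fy0) * (py0 - px0) + (fy0 + fx1) * (px1 - py0) +
        (fx1 + fy1) * (py1 - px1) + (fy1 + fx0) * (px0 - py1) = 0 ↔
      (fy1 - fy0) / (fx1 - fx0) = (θ1 - θ0) / (θ1 + θ0)) ∧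
    -- closedness of f(x)+f(y) recovered from g ↔ CR for g
    ((gy0 - gx0) / (py0 - px0) - (gx1 - gy0) / (px1 - py0) +
        (gy1 - gx1) / (py1 - px1) - (gx0 - gy1) / (px0 - py1) = 0 ↔
      (gy1 - gy0) / (gx1 - gx0) = (θ1 - θ0) / (θ1 + θ0)) := by

  have hs : θ1 + θ0 ≠ 0 := fun h => hne' (by linear_combination h)
  have hd : θ1 - θ0 ≠ 0 := fun h => hne (by linear_combination -h)
  have hB : fx1 - fx0 ≠ 0 := sub_ne_zero.mpr hf
  have hG : gx1 - gx0 ≠ 0 := sub_ne_zero.mpr hg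
  have hp2' : py1 - px1 = -θ0 := by linear_combination -hp2
  have hp4' : py0 - px1 = -θ1 := by linear_combination -hp4
  have hp3' : px0 - py1 = -θ1 := by linear_combination -hp3
  rw [hp1] at h1; rw [hp3] at h2; rw [hp4'] at h3; rw [hp2'] at h4
  have key : (fy1 - fy0) * (θ1 + θ0) = (fx1 - fx0) * (θ1 - θ0) := by
    linear_combination h1 - h2 + h4 - h3
  have CRf : (fy1 - fy0) / (fx1 - fx0) = (θ1 - θ0) / (θ1 + θ0) := by
    rw [div_eq_div_iff hB hs]; linear_combination key
  have CRg : (gy1 - gy0) / (gx1 - gx0) = (θ1 - θ0) / (θ1 + θ0) := by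
    rw [div_eq_div_iff hG hs]
    linear_combination (θ1 + θ0) * h2 - (θ1 + θ0) * h1 - (θ1 - θ0) * h1 +
      (θ1 - θ0) * h3 + θ1 * key
  have closef : (fx0 + fy0) * (py0 - px0) + (fy0 + fx1) * (px1 - py0) +
      (fx1 + fy1) * (py1 - px1) + (fy1 + fx0) * (px0 - py1) = 0 := by
    rw [hp1, hp4, hp2', hp3']; linear_combination -key
  have closeg : (gy0 - gx0) / (py0 - px0) - (gx1 - gy0) / (px1 - py0) +
      (gy1 - gx1) / (py1 - px1) - (gx0 - gy1) / (px0 - py1) = 0 := by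
    have e1 : (gy0 - gx0) / θ0 = fx0 + fy0 := by rw [h1]; field_simp
    have e2 : (gx1 - gy0) / θ1 = fx1 + fy0 := by
      rw [show gx1 - gy0 = (fx1 + fy0) * θ1 by linear_combination -h3]; field_simp
    have e3 : (gy1 - gx1) / (-θ0) = fx1 + fy1 := by
      rw [show gy1 - gx1 = (fx1 + fy1) * -θ0 from h4]; field_simp
    have e4 : (gx0 - gy1) / (-θ1) = fx0 + fy1 := by
      rw [show gx0 - gy1 = (fx0 + fy1) * -θ1 by linear_combination -h2]; field_simp
    rw [hp1, hp4, hp2', hp3', e1, e2, e3, e4]; ring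
  exact ⟨iff_of_true CRf CRg, iff_of_true closef CRf, iff_of_true closeg CRg⟩
end

section
/- Discrete Moutard transformation compatibility: let f, f₁, f₂, f₁₂ be vectors in ℝ^N satisfying the discrete Moutard equation f₁₂ + f = a₁₂(f₁ + f₂) with a₁₂ ≠ 0, and let f⁺ be another vector. Given nonzero reals b₁, b₂, define f₁⁺ and f₂⁺ by the transformation equations f₁⁺ − f = b₁(f⁺ − f₁) and f₂⁺ + f = b₂(f⁺ + f₂). Then there exists a choice of f₁₂⁺ consistent with all the remaining equations (τ₂ of the first equation, τ₁ of the second equation, and the Moutard equation f₁₂⁺ + f⁺ = a₁₂⁺(f₁⁺ + f₂⁺)) if and only if (τ₂b₁)/b₁ = (τ₁b₂)/b₂ = a₁₂⁺/a₁₂ = 1/((b₁+b₂)a₁₂ − b₁b₂), where τ₂b₁, τ₁b₂, a₁₂⁺ denote the transformed coefficients; in particular, with coefficients so defined, f₁₂⁺ computed from f₁₂⁺ − f₂ = (τ₂b₁)(f₂⁺ − f₁₂) coincides with f₁₂⁺ computed from f₁₂⁺ + f₁ = (τ₁b₂)(f₁⁺ + f₁₂). -/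
/-- Compatibility of the discrete Moutard transformation: the transformed coefficients
`τ₂b₁ = c₁`, `τ₁b₂ = c₂`, `a₁₂⁺ = ap` admit a consistent value of `f₁₂⁺` (for all initial
data satisfying the Moutard and transformation equations) if and only if
`c₁/b₁ = c₂/b₂ = ap/a₁₂ = 1/((b₁+b₂)a₁₂ − b₁b₂)`; in particular, with the coefficients so
defined, the two computations of `f₁₂⁺` coincide. -/
theorem discrete_moutard_transformation_compatibility
    (N : ℕ) (hN : 1 ≤ N)
    (a12 b1 b2 : ℝ) (ha : a12 ≠ 0) (hb1 : b1 ≠ 0) (hb2 : b2 ≠ 0)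
    (hD : (b1 + b2) * a12 - b1 * b2 ≠ 0)
    (c1 c2 ap : ℝ) :
    ((∀ f f1 f2 fp f12 f1p f2p : Fin N → ℝ,
        f12 + f = a12 • (f1 + f2) →
        f1p - f = b1 • (fp - f1) →
        f2p + f = b2 • (fp + f2) →
        ∃ f12p : Fin N → ℝ,
          f12p - f2 = c1 • (f2p - f12) ∧
          f12p + f1 = c2 • (f1p + f12) ∧
          f12p + fp = ap • (f1p + f2p)) ↔
      (c1 / b1 = 1 / ((b1 + b2) * a12 - b1 * b2) ∧
       c2 / b2 = 1 / ((b1 + b2) * a12 - b1 * b2) ∧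
       ap / a12 = 1 / ((b1 + b2) * a12 - b1 * b2))) ∧
    (∀ f f1 f2 fp f12 f1p f2p : Fin N → ℝ,
        f12 + f = a12 • (f1 + f2) →
        f1p - f = b1 • (fp - f1) →
        f2p + f = b2 • (fp + f2) →
        f2 + (b1 / ((b1 + b2) * a12 - b1 * b2)) • (f2p - f12) =
          -f1 + (b2 / ((b1 + b2) * a12 - b1 * b2)) • (f1p + f12)) := by
  have i0 : Fin N := ⟨0, hN⟩
  have part2 : ∀ f f1 f2 fp f12 f1p f2p : Fin N → ℝ,
      f12 + f = a12 • (f1 + f2) →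
      f1p - f = b1 • (fp - f1) →
      f2p + f = b2 • (fp + f2) →
      f2 + (b1 / ((b1 + b2) * a12 - b1 * b2)) • (f2p - f12) =
        -f1 + (b2 / ((b1 + b2) * a12 - b1 * b2)) • (f1p + f12) := by
    intro f f1 f2 fp f12 f1p f2p hM hT1 hT2
    funext i
    have hMi : f12 i = a12 * (f1 i + f2 i) - f i := by
      have := congrFun hM i; simp [Pi.add_apply, Pi.smul_apply, smul_eq_mul] at this; linarith
    have hQ1 : f1p i = f i + b1 * (fp i - f1 i) := by
      have := congrFun hT1 i; simp [Pi.sub_apply, Pi.smul_apply, smul_eq_mul] at this; linarith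
    have hQ2 : f2p i = -f i + b2 * (fp i + f2 i) := by
      have := congrFun hT2 i; simp [Pi.add_apply, Pi.sub_apply, Pi.smul_apply, smul_eq_mul] at this; linarith
    simp only [Pi.add_apply, Pi.neg_apply, Pi.sub_apply, Pi.smul_apply, smul_eq_mul]
    rw [hMi, hQ1, hQ2]
    field_simp
    ring
  refine ⟨⟨?_, ?_⟩, part2⟩
  · intro h
    -- data 1: fp = const 1
    obtain ⟨g, hg1, hg2, hg3⟩ := h 0 0 0 (fun _ => 1) 0 (b1 • fun _ => (1:ℝ)) (b2 • fun _ => (1:ℝ))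
      (by funext i; simp) (by funext i; simp) (by funext i; simp)
    have e1 : g i0 = c1 * b2 := by
      have := congrFun hg1 i0; simpa using this
    have e3 : g i0 + 1 = ap * (b1 + b2) := by
      have := congrFun hg3 i0; simp at this; linarith
    have hA : c1 * b2 + 1 = ap * (b1 + b2) := by rw [← e1]; exact e3
    -- data 2: f1 = const 1
    obtain ⟨g', hg1', hg2', hg3'⟩ := h 0 (fun _ => 1) 0 0 (a12 • fun _ => (1:ℝ))
      ((-b1) • fun _ => (1:ℝ)) 0
      (by funext i; simp) (by funext i; simp) (by funext i; simp)
    have e1' : g' i0 = c1 * (-a12) := by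
      have := congrFun hg1' i0; simp at this; linarith
    have e3' : g' i0 = ap * (-b1) := by
      have := congrFun hg3' i0; simp at this; linarith
    have hB : c1 * a12 = ap * b1 := by nlinarith [e1', e3']
    -- data 3: f2 = const 1
    obtain ⟨g'', hg1'', hg2'', hg3''⟩ := h 0 0 (fun _ => 1) 0 (a12 • fun _ => (1:ℝ))
      0 (b2 • fun _ => (1:ℝ))
      (by funext i; simp) (by funext i; simp) (by funext i; simp)
    have e2'' : g'' i0 = c2 * a12 := by
      have := congrFun hg2'' i0; simp at this; linarith
    have e3'' : g'' i0 = ap * b2 := by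
      have := congrFun hg3'' i0; simp at this; linarith
    have hC : c2 * a12 = ap * b2 := by rw [← e2'', e3'']
    have hap : ap * ((b1 + b2) * a12 - b1 * b2) = a12 := by linear_combination b2 * hB - a12 * hA
    refine ⟨?_, ?_, ?_⟩
    · rw [div_eq_div_iff hb1 hD]
      have key : a12 * (c1 * ((b1 + b2) * a12 - b1 * b2) - b1 * 1) = 0 := by
        linear_combination ((b1 + b2) * a12 - b1 * b2) * hB + b1 * hap
      have := (mul_eq_zero.mp key).resolve_left ha
      linarith
    · rw [div_eq_div_iff hb2 hD]
      have := (mul_eq_zero.mp (by linear_combination ((b1 + b2) * a12 - b1 * b2) * hC + b2 * hap :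
        a12 * (c2 * ((b1 + b2) * a12 - b1 * b2) - b2 * 1) = 0)).resolve_left ha
      linarith
    · rw [div_eq_div_iff ha hD]
      linarith [hap]
  · rintro ⟨h1, h2, h3⟩
    intro f f1 f2 fp f12 f1p f2p hM hT1 hT2
    have hc1 : c1 = b1 / ((b1 + b2) * a12 - b1 * b2) := by
      rw [div_eq_div_iff hb1 hD] at h1
      rw [eq_div_iff hD]; linarith
    have hc2 : c2 = b2 / ((b1 + b2) * a12 - b1 * b2) := by
      rw [div_eq_div_iff hb2 hD] at h2
      rw [eq_div_iff hD]; linarith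
    have hap : ap = a12 / ((b1 + b2) * a12 - b1 * b2) := by
      rw [div_eq_div_iff ha hD] at h3
      rw [eq_div_iff hD]; linarith
    refine ⟨f2 + c1 • (f2p - f12), by funext i; simp, ?_, ?_⟩
    · have h := part2 f f1 f2 fp f12 f1p f2p hM hT1 hT2
      funext i
      have hi := congrFun h i
      simp only [Pi.add_apply, Pi.neg_apply, Pi.sub_apply, Pi.smul_apply, smul_eq_mul] at hi ⊢
      rw [hc1, hc2]; linarith
    · funext i
      have hMi : f12 i = a12 * (f1 i + f2 i) - f i := by
        have := congrFun hM i; simp [Pi.add_apply, Pi.smul_apply, smul_eq_mul] at this; linarith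
      have hQ1 : f1p i = f i + b1 * (fp i - f1 i) := by
        have := congrFun hT1 i; simp [Pi.sub_apply, Pi.smul_apply, smul_eq_mul] at this; linarith
      have hQ2 : f2p i = -f i + b2 * (fp i + f2 i) := by
        have := congrFun hT2 i; simp [Pi.add_apply, Pi.sub_apply, Pi.smul_apply, smul_eq_mul] at this; linarith
      simp only [Pi.add_apply, Pi.sub_apply, Pi.smul_apply, smul_eq_mul]
      rw [hc1, hap, hMi, hQ1, hQ2]
      field_simp
      ring
end
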